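/- arXiv:2408.08392 — 7 statements merged into one kernel-verified Lean document; each statement's English description precedes it below -/
import Mathlib

section
/- Let r_max ≥ 1 and ρ = lcm{1,...,r_max}. Let F' be a finite multiset of positive integers each at most r_max, whose total sum exceeds r_max·(ρ−1). Then there exists a value r ∈ {1,...,r_max} and a sub-multiset of F' consisting entirely of copies of r whose sum is exactly ρ. -/
/-! Pigeonhole on values: if each `r ≤ r_max` contributed less than `ρ` to the sum, the total would
be at most `r_max * (ρ - 1)`. A value `r` contributing at least `ρ` occurs at least `ρ / r` times,
and since `r ∣ ρ` those copies sum to exactly `ρ`. -/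

theorem Multiset.exists_lt_count_nsmul_of_card_nsmul_lt_sum {M : Type*} [AddCommMonoid M]
    [LinearOrder M] [IsOrderedAddMonoid M] [DecidableEq M] {s : Finset M} {F : Multiset M}
    (hF : ∀ x ∈ F, x ∈ s) {B : M} (h : s.card • B < F.sum) :
    ∃ a ∈ s, B < F.count a • a := by
  by_contra! hle
  have hsub : F.toFinset ⊆ s := fun x hx => hF x (Multiset.mem_toFinset.mp hx)
  refine h.not_ge ?_
  calc F.sum = ∑ a ∈ s, F.count a • a := Finset.sum_multiset_count_of_subset F s hsub
    _ ≤ s.card • B := Finset.sum_le_card_nsmul s _ B hle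

theorem Multiset.exists_le_forall_eq_sum_eq_of_dvd {F : Multiset ℕ} {r ρ : ℕ} (hr : r ∣ ρ)
    (hρ : ρ ≤ F.count r * r) : ∃ B ≤ F, (∀ x ∈ B, x = r) ∧ B.sum = ρ := by
  refine ⟨Multiset.replicate (ρ / r) r, ?_, fun x hx => Multiset.eq_of_mem_replicate hx, ?_⟩
  · exact Multiset.le_count_iff_replicate_le.mp (Nat.div_le_of_le_mul (by linarith))
  · rw [Multiset.sum_replicate, smul_eq_mul, Nat.div_mul_cancel hr]

theorem stmt_1_general (r_max : ℕ) (F' : Multiset ℕ)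
    (hmem : ∀ x ∈ F', 1 ≤ x ∧ x ≤ r_max)
    (hsum : r_max * ((Finset.Icc 1 r_max).lcm id - 1) < F'.sum) :
    ∃ r ∈ Finset.Icc 1 r_max, ∃ B : Multiset ℕ,
      B ≤ F' ∧ (∀ x ∈ B, x = r) ∧ B.sum = (Finset.Icc 1 r_max).lcm id := by
  set ρ := (Finset.Icc 1 r_max).lcm id
  have hcard : (Finset.Icc 1 r_max).card • (ρ - 1) < F'.sum := by simpa using hsum
  obtain ⟨r, hr, hcount⟩ := Multiset.exists_lt_count_nsmul_of_card_nsmul_lt_sum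
    (fun x hx => Finset.mem_Icc.mpr (hmem x hx)) hcard
  have hdvd : r ∣ ρ := Finset.dvd_lcm hr
  have hρ : ρ ≤ F'.count r * r := by rw [smul_eq_mul] at hcount; omega
  exact ⟨r, hr, Multiset.exists_le_forall_eq_sum_eq_of_dvd hdvd hρ⟩

/-- If a finite multiset of positive integers, each at most `r_max`, has total sum
exceeding `r_max * (ρ - 1)` where `ρ = lcm{1,...,r_max}`, then it contains a
homogeneous `ρ`-block: a sub-multiset all of whose elements equal some common
value `r ∈ {1,...,r_max}` and whose sum is exactly `ρ`. -/
theorem stmt_1 (r_max : ℕ) (hr : 1 ≤ r_max) (F' : Multiset ℕ)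
    (hmem : ∀ x ∈ F', 1 ≤ x ∧ x ≤ r_max)
    (hsum : r_max * ((Finset.Icc 1 r_max).lcm id - 1) < F'.sum) :
    ∃ r ∈ Finset.Icc 1 r_max, ∃ B : Multiset ℕ,
      B ≤ F' ∧ (∀ x ∈ B, x = r) ∧ B.sum = (Finset.Icc 1 r_max).lcm id :=
  stmt_1_general r_max F' hmem hsum
end

section
/- With utilities defined as in the standard Pareto-to-MaxUtil reduction (u_i[j] = |{p_{j'} : p_j ⪰_i p_{j'}}| for acceptable places, −m·n for unacceptable places), if σ' is a Pareto-improvement of σ among acceptable assignments, then util(σ') > util(σ). Hence a maximum-utility feasible assignment with positive utility is feasible, acceptable and Pareto-optimal for the original preference instance. -/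
open Classical

/-- Utility from the standard Pareto-to-MaxUtil reduction. -/
noncomputable def reducUtil7 {F P : Type*} [Fintype F] [Fintype P]
    (acc : F → P → Prop) (pref : F → P → P → Prop) (f : F) (p : P) : ℤ :=
  if acc f p then (Nat.card {p' : P // acc f p' ∧ pref f p p'} : ℤ)
  else -(Fintype.card P * Fintype.card F : ℕ)

noncomputable def reducTotal7 {F P : Type*} [Fintype F] [Fintype P]
    (acc : F → P → Prop) (pref : F → P → P → Prop) (σ : F → Option P) : ℤ :=
  ∑ f, (σ f).elim 0 (reducUtil7 acc pref f)

/-- The preference order extended to `Option P`, with `⊥ = none` at the bottom: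
`wle f o o'` means `f` weakly prefers outcome `o'` to outcome `o`. -/
def wle7 {F P : Type*} (pref : F → P → P → Prop) (f : F) (o o' : Option P) : Prop :=
  match o, o' with
  | none, _ => True
  | some _, none => False
  | some p, some q => pref f q p

/-- Acceptable assignment. -/
def Acc7 {F P : Type*} (acc : F → P → Prop) (σ : F → Option P) : Prop :=
  ∀ f p, σ f = some p → acc f p

/-- Pareto-improvement: every family weakly improves, some family strictly. -/
def PImp7 {F P : Type*} (pref : F → P → P → Prop) (σ σ' : F → Option P) : Prop :=
  (∀ f, wle7 pref f (σ f) (σ' f)) ∧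
  (∃ f, wle7 pref f (σ f) (σ' f) ∧ ¬ wle7 pref f (σ' f) (σ f))

/-!
An acceptable place is worth the number of acceptable places weakly below it. By reflexivity
and transitivity this count is strictly monotone in the preference order, and it is positive, so
it lies above the value `0` of `⊥`; summing over families, a Pareto-improvement strictly raises
the total. An unacceptable place costs `|P| |F|`, while each of the other families contributes
at most `|P|`, so a single unacceptable place makes the total nonpositive: a positive maximum is
acceptable, and then no Pareto-improvement can exist by the first part.
-/

section CardBelow

variable {α : Type*} [Finite α] {r : α → α → Prop} {s : α → Prop} {p q : α}

lemma natCard_below_le_of_trans (htrans : ∀ a b c, r a b → r b c → r a c) (hqp : r q p) :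
    Nat.card {x // s x ∧ r p x} ≤ Nat.card {x // s x ∧ r q x} :=
  Nat.card_mono (Set.toFinite {x | s x ∧ r q x}) fun _ hx => ⟨hx.1, htrans _ _ _ hqp hx.2⟩

lemma natCard_below_lt_of_trans (htrans : ∀ a b c, r a b → r b c → r a c) (hqp : r q p)
    (hpq : ¬ r p q) (hq : s q) (hqq : r q q) :
    Nat.card {x // s x ∧ r p x} < Nat.card {x // s x ∧ r q x} := by
  have hssub : {x | s x ∧ r p x} ⊂ {x | s x ∧ r q x} :=
    ⟨fun _ hx => ⟨hx.1, htrans _ _ _ hqp hx.2⟩, fun hsub => hpq (hsub ⟨hq, hqq⟩).2⟩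
  have hlt := Set.ncard_lt_ncard hssub (Set.toFinite _)
  rwa [← Nat.card_coe_set_eq, ← Nat.card_coe_set_eq] at hlt

end CardBelow

section ReducUtil

variable {F P : Type*} [Fintype F] [Fintype P] {acc : F → P → Prop} {pref : F → P → P → Prop}
  {f : F} {p : P} {o o' : Option P}

lemma reducUtil7_le_card : reducUtil7 acc pref f p ≤ Fintype.card P := by
  unfold reducUtil7
  split_ifs
  · exact_mod_cast (Nat.card_le_card_of_injective (β := P) _ Subtype.val_injective).trans_eq
      Nat.card_eq_fintype_card
  · exact (neg_nonpos.mpr (Nat.cast_nonneg _)).trans (Nat.cast_nonneg _)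

lemma reducUtil7_pos (hrefl : ∀ f p, acc f p → pref f p p) (hp : acc f p) :
    0 < reducUtil7 acc pref f p := by
  rw [reducUtil7, if_pos hp, Nat.cast_pos]
  exact Nat.card_pos_iff.mpr ⟨⟨⟨p, hp, hrefl f p hp⟩⟩, inferInstance⟩

lemma elim_reducUtil7_le_of_wle7 (htrans : ∀ f p q s, pref f p q → pref f q s → pref f p s)
    (ho : ∀ p ∈ o, acc f p) (ho' : ∀ p ∈ o', acc f p) (h : wle7 pref f o o') :
    o.elim 0 (reducUtil7 acc pref f) ≤ o'.elim 0 (reducUtil7 acc pref f) := by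
  match o, o', h with
  | none, none, _ => exact le_rfl
  | none, some q, _ => simp [reducUtil7, ho' q rfl]
  | some p, some q, hqp =>
    simp only [Option.elim, reducUtil7, if_pos (ho p rfl), if_pos (ho' q rfl)]
    exact_mod_cast natCard_below_le_of_trans (htrans f) hqp

lemma elim_reducUtil7_lt_of_wle7 (hrefl : ∀ f p, acc f p → pref f p p)
    (htrans : ∀ f p q s, pref f p q → pref f q s → pref f p s)
    (ho : ∀ p ∈ o, acc f p) (ho' : ∀ p ∈ o', acc f p)
    (h : wle7 pref f o o') (hstrict : ¬ wle7 pref f o' o) :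
    o.elim 0 (reducUtil7 acc pref f) < o'.elim 0 (reducUtil7 acc pref f) := by
  match o, o', h with
  | none, none, _ => exact absurd trivial hstrict
  | none, some q, _ => exact reducUtil7_pos hrefl (ho' q rfl)
  | some p, some q, hqp =>
    have hq := ho' q rfl
    simp only [Option.elim, reducUtil7, if_pos (ho p rfl), if_pos hq]
    exact_mod_cast natCard_below_lt_of_trans (htrans f) hqp hstrict hq (hrefl f q hq)

end ReducUtil

section ReducTotal

variable {F P : Type*} [Fintype F] [Fintype P] {acc : F → P → Prop} {pref : F → P → P → Prop}
  {σ σ' : F → Option P}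

lemma reducTotal7_lt_of_PImp7 (hrefl : ∀ f p, acc f p → pref f p p)
    (htrans : ∀ f p q s, pref f p q → pref f q s → pref f p s)
    (hσ : Acc7 acc σ) (hσ' : Acc7 acc σ') (himp : PImp7 pref σ σ') :
    reducTotal7 acc pref σ < reducTotal7 acc pref σ' := by
  obtain ⟨hweak, f, hf, hstrict⟩ := himp
  exact Finset.sum_lt_sum
    (fun g _ => elim_reducUtil7_le_of_wle7 htrans (hσ g) (hσ' g) (hweak g))
    ⟨f, Finset.mem_univ f, elim_reducUtil7_lt_of_wle7 hrefl htrans (hσ f) (hσ' f) hf hstrict⟩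

lemma reducTotal7_nonpos_of_not_acc {f : F} {p : P} (hfp : σ f = some p) (hp : ¬ acc f p) :
    reducTotal7 acc pref σ ≤ 0 := by
  have hrest : ∑ g ∈ Finset.univ.erase f, (σ g).elim 0 (reducUtil7 acc pref g) ≤
      ∑ _g : F, (Fintype.card P : ℤ) :=
    (Finset.sum_le_sum fun g _ => by
        cases σ g
        exacts [Nat.cast_nonneg _, reducUtil7_le_card]).trans
      (Finset.sum_le_sum_of_subset_of_nonneg (Finset.erase_subset f _) fun _ _ _ =>
        Nat.cast_nonneg _)
  rw [reducTotal7, ← Finset.add_sum_erase _ _ (Finset.mem_univ f), hfp]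
  simp only [Finset.sum_const, Finset.card_univ, nsmul_eq_mul] at hrest
  rw [Option.elim_some, reducUtil7, if_neg hp, Nat.cast_mul]
  linarith

lemma Acc7_of_reducTotal7_pos (hpos : 0 < reducTotal7 acc pref σ) : Acc7 acc σ :=
  fun _ _ hfp => by_contra fun hp => (reducTotal7_nonpos_of_not_acc hfp hp).not_gt hpos

end ReducTotal

theorem stmt_7_general {F P : Type*} [Fintype F] [Fintype P]
    (acc : F → P → Prop) (pref : F → P → P → Prop)
    (hrefl : ∀ f p, acc f p → pref f p p)
    (htrans : ∀ f p q s, pref f p q → pref f q s → pref f p s)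
    (feasible : (F → Option P) → Prop) :
    (∀ σ σ' : F → Option P, Acc7 acc σ → Acc7 acc σ' → PImp7 pref σ σ' →
      reducTotal7 acc pref σ < reducTotal7 acc pref σ') ∧
    (∀ σ : F → Option P, feasible σ →
      (∀ τ, feasible τ → reducTotal7 acc pref τ ≤ reducTotal7 acc pref σ) →
      0 < reducTotal7 acc pref σ →
      Acc7 acc σ ∧
        ∀ σ', feasible σ' → Acc7 acc σ' → ¬ PImp7 pref σ σ') := by
  have hlt : ∀ σ σ' : F → Option P, Acc7 acc σ → Acc7 acc σ' → PImp7 pref σ σ' →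
      reducTotal7 acc pref σ < reducTotal7 acc pref σ' :=
    fun _ _ hσ hσ' => reducTotal7_lt_of_PImp7 hrefl htrans hσ hσ'
  refine ⟨hlt, fun σ _ hmax hpos => ?_⟩
  have hσ : Acc7 acc σ := Acc7_of_reducTotal7_pos hpos
  exact ⟨hσ, fun σ' hfeas' hσ' himp => (hmax σ' hfeas').not_gt (hlt σ σ' hσ hσ' himp)⟩

/-- With the reduction utilities: a Pareto-improvement among acceptable assignments
strictly increases total utility; hence a maximum-utility feasible assignment with
positive utility is feasible, acceptable, and Pareto-optimal. -/
theorem stmt_7 {F P : Type*} [Fintype F] [Fintype P]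
    (acc : F → P → Prop) (pref : F → P → P → Prop)
    (hpref_acc : ∀ f p q, pref f p q → acc f p ∧ acc f q)
    (hrefl : ∀ f p, acc f p → pref f p p)
    (htrans : ∀ f p q s, pref f p q → pref f q s → pref f p s)
    (feasible : (F → Option P) → Prop) :
    (∀ σ σ' : F → Option P, Acc7 acc σ → Acc7 acc σ' → PImp7 pref σ σ' →
      reducTotal7 acc pref σ < reducTotal7 acc pref σ') ∧
    (∀ σ : F → Option P, feasible σ →
      (∀ τ, feasible τ → reducTotal7 acc pref τ ≤ reducTotal7 acc pref σ) →
      0 < reducTotal7 acc pref σ →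
      Acc7 acc σ ∧
        ∀ σ', feasible σ' → Acc7 acc σ' → ¬ PImp7 pref σ σ') :=
  stmt_7_general acc pref hrefl htrans feasible
end

section
/- Let G be a graph with vertex set V and edge set E, and consider the single-place resettlement instance in which families are the vertices, services are E ∪ {s_1,...,s_k} where V is partitioned into V_1,...,V_k; each vertex v ∈ V_i requires one unit of each service corresponding to its incident edges and one unit of s_i; the single place p has upper quota 1 on every service, lower quota 1 on each s_i and 0 on each edge-service. Then a feasible assignment exists if and only if G contains an independent set with exactly one vertex from each V_i. -/
namespace Finset

variable {V : Type*} [DecidableEq V]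

theorem card_filter_mem_sym2_le_one_iff (S : Finset V) {u v : V} (huv : u ≠ v) :
    #(S.filter (fun w => w ∈ s(u, v))) ≤ 1 ↔ ¬(u ∈ S ∧ v ∈ S) := by
  simp only [card_le_one, mem_filter, Sym2.mem_iff]
  constructor
  · rintro h ⟨hu, hv⟩
    exact huv (h u ⟨hu, .inl rfl⟩ v ⟨hv, .inr rfl⟩)
  · rintro h a ⟨ha, rfl | rfl⟩ b ⟨hb, rfl | rfl⟩ <;> tauto

theorem card_filter_mem_edge_le_one_iff (G : SimpleGraph V) (S : Finset V) :
    (∀ e ∈ G.edgeSet, #(S.filter (fun v => v ∈ e)) ≤ 1) ↔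
      ∀ u ∈ S, ∀ v ∈ S, ¬G.Adj u v := by
  constructor
  · intro h u hu v hv huv
    exact (card_filter_mem_sym2_le_one_iff S huv.ne).1 (h s(u, v) huv) ⟨hu, hv⟩
  · intro h e he
    induction e using Sym2.ind with
    | _ u v =>
      exact (card_filter_mem_sym2_le_one_iff S (G.ne_of_adj he)).2
        fun ⟨hu, hv⟩ => h u hu v hv he

end Finset

theorem stmt_8_general {V : Type*} [DecidableEq V] (G : SimpleGraph V)
    (k : ℕ) (c : V → Fin k) :
    (∃ S : Finset V,
        (∀ e ∈ G.edgeSet, (S.filter (fun v => v ∈ e)).card ≤ 1) ∧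
        (∀ i : Fin k, (S.filter (fun v => c v = i)).card = 1)) ↔
    (∃ S : Finset V,
        (∀ u ∈ S, ∀ v ∈ S, ¬ G.Adj u v) ∧
        (∀ i : Fin k, ∃! v, v ∈ S ∧ c v = i)) := by
  refine exists_congr fun S => and_congr (Finset.card_filter_mem_edge_le_one_iff G S) ?_
  simp only [Finset.card_eq_one_iff_existsUnique, Finset.mem_filter]

/-- Multicolored-independent-set instance: families are vertices, the single place
offers one unit of each edge-service (upper quota 1, lower quota 0) and one unit of
each colour-service `s_i` (lower and upper quota 1); vertex `v` in part `i` requires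
one unit of each incident-edge service and one unit of `s_i`. A feasible assignment
(set `S` of families sent to the place) exists iff `G` has an independent set with
exactly one vertex from each part. -/
theorem stmt_8 {V : Type*} [Fintype V] [DecidableEq V] (G : SimpleGraph V)
    (k : ℕ) (c : V → Fin k) :
    (∃ S : Finset V,
        (∀ e ∈ G.edgeSet, (S.filter (fun v => v ∈ e)).card ≤ 1) ∧
        (∀ i : Fin k, (S.filter (fun v => c v = i)).card = 1)) ↔
    (∃ S : Finset V,
        (∀ u ∈ S, ∀ v ∈ S, ¬ G.Adj u v) ∧
        (∀ i : Fin k, ∃! v, v ∈ S ∧ c v = i)) :=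
  stmt_8_general G k c
end

section
/- Let G = (V, E) be a graph. Consider the resettlement instance with families V, services E, three places p_1, p_2, p_3 each offering exactly one unit of each service in E with zero lower quotas, where each vertex-family v requires one unit of each service corresponding to an edge incident to v. Then a feasible and complete assignment (every family assigned to some place) exists if and only if G is properly 3-colorable. -/
attribute [local instance] Classical.propDecidable

open Finset

theorem card_filter_and_mem_sym2_le_one_iff {V : Type*} [Fintype V] {u v : V} (huv : u ≠ v)
    (p : V → Prop) [DecidablePred fun w => p w ∧ w ∈ s(u, v)] :
    #{w | p w ∧ w ∈ s(u, v)} ≤ 1 ↔ ¬(p u ∧ p v) := by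
  rw [card_le_one]
  simp only [mem_filter, mem_univ, true_and, Sym2.mem_iff]
  constructor
  · rintro h ⟨hu, hv⟩
    exact huv (h u ⟨hu, .inl rfl⟩ v ⟨hv, .inr rfl⟩)
  · rintro h a ⟨ha, rfl | rfl⟩ b ⟨hb, rfl | rfl⟩
    all_goals first | rfl | exact (h ⟨ha, hb⟩).elim | exact (h ⟨hb, ha⟩).elim

/-- Three places, each offering one unit of each edge-service, no lower quotas;
each vertex-family requires one unit of each incident-edge service. There is a
feasible and complete assignment iff the graph is properly 3-colorable. -/
theorem stmt_9 {V : Type*} [Fintype V] [DecidableEq V] (G : SimpleGraph V) :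
    (∃ σ : V → Option (Fin 3),
        (∀ v, σ v ≠ none) ∧
        (∀ j : Fin 3, ∀ e ∈ G.edgeSet,
          (Finset.univ.filter (fun v => σ v = some j ∧ v ∈ e)).card ≤ 1)) ↔
    (∃ c : V → Fin 3, ∀ u v, G.Adj u v → c u ≠ c v) := by
  constructor
  · rintro ⟨σ, hcomplete, hfeasible⟩
    choose c hc using fun v => Option.ne_none_iff_exists'.mp (hcomplete v)
    refine ⟨c, fun u v huv hcuv => ?_⟩
    exact (card_filter_and_mem_sym2_le_one_iff (G.ne_of_adj huv) _).mp
      (hfeasible (c u) s(u, v) huv) ⟨hc u, hcuv ▸ hc v⟩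
  · rintro ⟨c, hc⟩
    refine ⟨some ∘ c, fun v => Option.some_ne_none _, fun j e he => ?_⟩
    induction e using Sym2.ind with | _ u v => ?_
    refine (card_filter_and_mem_sym2_le_one_iff (G.ne_of_adj he) _).mpr ?_
    rintro ⟨hu, hv⟩
    exact hc u v he (Option.some_injective _ (hu.trans hv.symm))
end

section
/- Let G = (V, E) be a graph and k ≤ |V|. Consider the resettlement instance with families V, services E ∪ {s*}, and two places: p* offering one unit of each edge-service and k units of s*, and p offering |V|−k units of every service; each family v requires one unit of s* and one unit of each service for its incident edges; there are no lower quotas. Then a feasible complete assignment exists if and only if G has an independent set of size k. -/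
/-! An assignment is `σ : V → Option Bool`, with `some true` for `p*`, `some false` for `p` and
`none` for `⊥`. The families sent to `p*` form a set `T` meeting every edge at most once, i.e. an
independent set, and `|T| ≤ k`; the families sent to `p` number `|V| - |T| ≤ |V| - k`, which
forces `|T| = k`. Conversely an independent set of size `k` is sent to `p*` and everything else
to `p`, where the capacity `|V| - k` is never exceeded since only `|V| - k` families go there. -/

open Finset

namespace SimpleGraph

variable {V : Type*} [DecidableEq V] {G : SimpleGraph V}

theorem forall_card_filter_mem_edge_le_one_iff {S : Finset V} :
    (∀ e ∈ G.edgeSet, #{v ∈ S | v ∈ e} ≤ 1) ↔ ∀ u ∈ S, ∀ v ∈ S, ¬G.Adj u v := by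
  constructor
  · intro hS u hu v hv huv
    have hpair : {u, v} ⊆ {w ∈ S | w ∈ s(u, v)} := by
      intro w hw
      rcases mem_insert.mp hw with rfl | hw
      · exact mem_filter.mpr ⟨hu, Sym2.mem_mk_left _ _⟩
      · rw [mem_singleton.mp hw]
        exact mem_filter.mpr ⟨hv, Sym2.mem_mk_right _ _⟩
    have := (card_le_card hpair).trans (hS _ huv)
    rw [card_pair huv.ne] at this
    omega
  · intro hS e he
    refine card_le_one.mpr fun a ha b hb => by_contra fun hab => ?_
    rw [mem_filter] at ha hb
    have hab_edge : e = s(a, b) := (Sym2.mem_and_mem_iff hab).mp ⟨ha.2, hb.2⟩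
    exact hS a ha.1 b hb.1 (by rwa [hab_edge] at he)

end SimpleGraph

open SimpleGraph

theorem card_filter_eq_some_true_add_card_filter_eq_some_false {V : Type*} [Fintype V]
    {σ : V → Option Bool} (hσ : ∀ v, σ v ≠ none) :
    #{v | σ v = some true} + #{v | σ v = some false} = Fintype.card V := by
  have hfalse :
      univ.filter (fun v => σ v = some false) = univ.filter (fun v => ¬σ v = some true) := by
    refine filter_congr fun v _ => ?_
    cases h : σ v with
    | none => exact absurd h (hσ v)
    | some b => cases b <;> simp
  rw [hfalse, card_filter_add_card_filter_not, card_univ]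

/-- Two places: `p*` (encoded `true`) offers one unit of each edge-service and `k`
units of `s*`; `p` (encoded `false`) offers `|V| - k` units of every service. Each
vertex-family requires one unit of `s*` and one unit of each incident-edge service;
no lower quotas. A feasible complete assignment exists iff `G` has an independent
set of size `k`. -/
theorem stmt_10 {V : Type*} [Fintype V] [DecidableEq V] (G : SimpleGraph V)
    (k : ℕ) (hk : k ≤ Fintype.card V) :
    (∃ σ : V → Option Bool,
        (∀ v, σ v ≠ none) ∧
        (Finset.univ.filter (fun v => σ v = some true)).card ≤ k ∧
        (Finset.univ.filter (fun v => σ v = some false)).card ≤ Fintype.card V - k ∧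
        (∀ e ∈ G.edgeSet,
          (Finset.univ.filter (fun v => σ v = some true ∧ v ∈ e)).card ≤ 1) ∧
        (∀ e ∈ G.edgeSet,
          (Finset.univ.filter (fun v => σ v = some false ∧ v ∈ e)).card ≤
            Fintype.card V - k)) ↔
    (∃ S : Finset V, S.card = k ∧ ∀ u ∈ S, ∀ v ∈ S, ¬ G.Adj u v) := by
  constructor
  · rintro ⟨σ, hσ, htrue, hfalse, hedge, -⟩
    refine ⟨univ.filter (fun v => σ v = some true), ?_,
      forall_card_filter_mem_edge_le_one_iff.mp ?_⟩
    · have := card_filter_eq_some_true_add_card_filter_eq_some_false hσ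
      omega
    · simpa only [filter_filter] using hedge
  · rintro ⟨S, rfl, hS⟩
    have htrue : univ.filter (fun v => some (decide (v ∈ S)) = some true) = S := by ext; simp
    have hfalse : univ.filter (fun v => some (decide (v ∈ S)) = some false) = Sᶜ := by ext; simp
    refine ⟨fun v => some (decide (v ∈ S)), fun _ => Option.some_ne_none _,
      card_le_card htrue.le, ?_, ?_, ?_⟩
    · rw [hfalse, card_compl]
    · simpa only [← filter_filter, htrue] using forall_card_filter_mem_edge_le_one_iff.mpr hS
    · intro e _
      rw [← card_compl, ← hfalse, ← filter_filter]
      exact card_filter_le _ _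
end

section
/- Let D be a finite directed acyclic graph on vertex set P with m = |P| vertices and let d: P×P → ℕ be a weight function such that (p,q) is an arc iff d(p,q) > ρ_1 for a threshold ρ_1. Suppose a vertex p_0 and a target set T ⊆ P satisfy: d_in(p_0) := Σ_{q≠p_0} d(q,p_0) > ρ_m, and for every vertex p ∉ T, Σ_{q≠p} d(p,q) > d_in(p) − ρ − r_max where ρ_j satisfies (ρ_j − ρ − r_max)/(m−1) = ρ_{j−1}. Then there is a directed path in D from p_0 to some vertex of T. -/
/-!
Call an arc `p → q` heavy if `d p q > ρ₁`, and let `k(p)` be the number of vertices reachable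
from `p` by heavy arcs. If no vertex of `T` is reachable from `p`, then `in(p) < ρ_{k(p)+2}`, by
strong induction on `k(p)`: a heavy arc `p → q` carries at most `in(q) < ρ_{k(q)+2} ≤ ρ_{k(p)+1}`
since `k(q) < k(p)` by acyclicity, a light one at most `ρ₁`, so `out(p) ≤ (m-1) ρ_{k(p)+1}` and
the flow condition at `p ∉ T` gives `in(p) < ρ_{k(p)+2}`. At `p₀`, either a heavy arc enters `p₀`
from a vertex that is not a descendant of `p₀`, so that `k(p₀) ≤ m - 2`, or all arcs into `p₀` are
light and `in(p₀) ≤ (m-1) ρ₁ ≤ ρ₂`; both contradict `in(p₀) > ρ_m`.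
-/

open Finset Relation

theorem le_of_threshold_rec {seq : ℕ → ℕ} {c e : ℕ} (hc : 1 ≤ c)
    (hrec : ∀ j, 2 ≤ j → seq j = seq (j - 1) * c + e)
    {i j : ℕ} (hi : 1 ≤ i) (hij : i ≤ j) : seq i ≤ seq j := by
  refine monotoneOn_nat_Ici_of_le_succ (fun n (hn : 1 ≤ n) ↦ ?_) hi (hi.trans hij) hij
  rw [hrec (n + 1) (by omega), Nat.add_sub_cancel]
  nlinarith

section Flows

variable {P : Type*} [Fintype P] [DecidableEq P]

def inFlow (d : P → P → ℕ) (p : P) : ℕ := ∑ q ∈ univ.filter (fun q => q ≠ p), d q p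

def outFlow (d : P → P → ℕ) (p : P) : ℕ := ∑ q ∈ univ.filter (fun q => q ≠ p), d p q

theorem sum_filter_ne_le_mul {f : P → ℕ} {p : P} {B : ℕ} (hf : ∀ q, q ≠ p → f q ≤ B) :
    ∑ q ∈ univ.filter (fun q => q ≠ p), f q ≤ B * (Fintype.card P - 1) := by
  calc ∑ q ∈ univ.filter (fun q => q ≠ p), f q
      ≤ #(univ.filter (fun q => q ≠ p)) • B :=
        sum_le_card_nsmul _ _ _ fun q hq ↦ hf q (mem_filter.mp hq).2
    _ = B * (Fintype.card P - 1) := by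
        rw [filter_ne', card_erase_of_mem (mem_univ p), card_univ, smul_eq_mul, mul_comm]

theorem le_inFlow (d : P → P → ℕ) {p q : P} (hpq : p ≠ q) : d p q ≤ inFlow d q :=
  single_le_sum (f := fun r ↦ d r q) (fun _ _ ↦ Nat.zero_le _) (by simp [hpq])

section Descendants

variable {A : P → P → Prop} {p q : P}

omit [DecidableEq P]

open Classical in
noncomputable def descendants (A : P → P → Prop) (p : P) : Finset P :=
  univ.filter (TransGen A p)

theorem mem_descendants : q ∈ descendants A p ↔ TransGen A p q := by
  simp [descendants]

theorem card_descendants_lt (hacyc : ∀ p, ¬ TransGen A p p) (hpq : TransGen A p q) :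
    #(descendants A q) < #(descendants A p) := by
  refine card_lt_card ((ssubset_iff_of_subset fun r hr ↦ ?_).mpr ⟨q, ?_, ?_⟩)
  · rw [mem_descendants] at hr ⊢
    exact hpq.trans hr
  · exact mem_descendants.mpr hpq
  · exact mt mem_descendants.mp (hacyc q)

theorem card_descendants_lt_card (hacyc : ∀ p, ¬ TransGen A p p) (p : P) :
    #(descendants A p) < Fintype.card P :=
  card_lt_univ_of_notMem (mt mem_descendants.mp (hacyc p))

end Descendants

theorem inFlow_lt_of_not_reachable {A : P → P → Prop} {d : P → P → ℕ} {seq : ℕ → ℕ} {e : ℕ}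
    {T : Set P} (hc : 1 ≤ Fintype.card P - 1)
    (hrec : ∀ j, 2 ≤ j → seq j = seq (j - 1) * (Fintype.card P - 1) + e)
    (hacyc : ∀ p, ¬ TransGen A p p) (hlight : ∀ p q, ¬ A p q → d p q ≤ seq 1)
    (hT : ∀ p ∉ T, inFlow d p < outFlow d p + e)
    (p : P) (hp : ∀ t ∈ T, ¬ ReflTransGen A p t) :
    inFlow d p < seq (#(descendants A p) + 2) := by
  induction hk : #(descendants A p) using Nat.strong_induction_on generalizing p with
  | _ k ih =>
  have hpT : p ∉ T := fun h ↦ hp p h .refl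
  have hout : outFlow d p ≤ seq (k + 1) * (Fintype.card P - 1) := by
    refine sum_filter_ne_le_mul fun q hqp ↦ ?_
    by_cases hpq : A p q
    · have hq : ∀ t ∈ T, ¬ ReflTransGen A q t := fun t ht hqt ↦ hp t ht (hqt.head hpq)
      have hlt := card_descendants_lt hacyc (.single hpq)
      calc d p q ≤ inFlow d q := le_inFlow d hqp.symm
        _ ≤ seq (#(descendants A q) + 2) := (ih _ (hk ▸ hlt) q hq rfl).le
        _ ≤ seq (k + 1) := le_of_threshold_rec hc hrec (by omega) (by omega)
    · exact (hlight p q hpq).trans (le_of_threshold_rec hc hrec le_rfl (by omega))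
  calc inFlow d p < outFlow d p + e := hT p hpT
    _ ≤ seq (k + 1) * (Fintype.card P - 1) + e := by omega
    _ = seq (k + 2) := (hrec (k + 2) (by omega)).symm

end Flows

/-- Abstract chain lemma: on a finite vertex set `P` with `m = |P|` vertices, let
`d` be a weight function and declare an arc `p → q` whenever `d p q > ρ_1`
(`ρ_1 = seq 1`). Suppose the arc relation is acyclic, the thresholds satisfy
`seq j = seq (j-1)·(m-1) + ρ + r_max` for `j ≥ 2`, the in-flow of `p₀` exceeds
`seq m`, and every vertex `p ∉ T` has out-flow exceeding its in-flow minus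
`ρ + r_max`. Then there is a directed path from `p₀` to some vertex of `T`. -/
theorem stmt_14 {P : Type*} [Fintype P] [DecidableEq P]
    (ρ r_max m : ℕ) (hm : m = Fintype.card P) (hm2 : 2 ≤ m)
    (d : P → P → ℕ) (seq : ℕ → ℕ)
    (hrec : ∀ j, 2 ≤ j → seq j = seq (j - 1) * (m - 1) + ρ + r_max)
    (hacyc : ∀ p : P, ¬ Relation.TransGen (fun p q => seq 1 < d p q) p p)
    (p0 : P) (T : Set P)
    (hin : seq m < ∑ q ∈ Finset.univ.filter (fun q => q ≠ p0), d q p0)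
    (hT : ∀ p : P, p ∉ T →
      (∑ q ∈ Finset.univ.filter (fun q => q ≠ p), d q p) <
        (∑ q ∈ Finset.univ.filter (fun q => q ≠ p), d p q) + ρ + r_max) :
    ∃ t ∈ T, Relation.ReflTransGen (fun p q => seq 1 < d p q) p0 t := by
  subst hm
  simp only [add_assoc] at hrec hT
  have hc : 1 ≤ Fintype.card P - 1 := by omega
  set A : P → P → Prop := fun p q => seq 1 < d p q
  change seq (Fintype.card P) < inFlow d p0 at hin
  by_contra! hunreach
  by_cases hfed : ∃ q, seq 1 < d q p0
  · obtain ⟨q, hq⟩ := hfed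
    have hdesc : #(descendants A p0) + 2 ≤ Fintype.card P := by
      have := card_descendants_lt hacyc (.single hq)
      have := card_descendants_lt_card hacyc q
      omega
    have hbound := inFlow_lt_of_not_reachable hc hrec hacyc (fun _ _ ↦ not_lt.mp) hT p0 hunreach
    exact (hin.trans (hbound.trans_le (le_of_threshold_rec hc hrec (by omega) hdesc))).false
  · simp only [not_exists, not_lt] at hfed
    have hlow : inFlow d p0 ≤ seq 1 * (Fintype.card P - 1) := sum_filter_ne_le_mul fun q _ ↦ hfed q
    have h2 : seq 2 = seq 1 * (Fintype.card P - 1) + (ρ + r_max) := hrec 2 le_rfl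
    have h2m := le_of_threshold_rec hc hrec (by omega) hm2
    exact (hin.trans_le (by omega : inFlow d p0 ≤ seq (Fintype.card P))).false
end

section
/- Let G = (A ∪ P, E) be a bipartite graph where A is a family of disjoint nonempty subsets of a finite family set F (a partial partition), P a set of places with vector quotas, a part Γ ∈ A adjacent to p_j iff lower quota of p_j ≤ Σ_{f_i∈Γ} r_i ≤ upper quota of p_j (component-wise in ℕ^t), with edge weight Σ_{f_i∈Γ} u_i[j]. Then matchings M in G correspond bijectively to feasible assignments σ with {σ^{-1}(p_j) : p_j matched} = {Γ matched}, and the weight of M equals util(σ). -/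
attribute [local instance] Classical.propDecidable

section
variable {F P : Type*} [Fintype F] [Fintype P] {t : ℕ}

/-- Load of a place under an assignment: coordinatewise sum of the requirement
vectors of the families assigned to it. -/
noncomputable def load15 (r : F → Fin t → ℕ) (σ : F → Option P) (p : P) (k : Fin t) : ℕ :=
  ∑ f ∈ Finset.univ.filter (fun f => σ f = some p), r f k

/-- Feasibility: every place's load lies between its lower and upper quota. -/
def Feasible15 (r : F → Fin t → ℕ) (lo hi : P → Fin t → ℕ) (σ : F → Option P) : Prop :=
  ∀ p k, lo p k ≤ load15 r σ p k ∧ load15 r σ p k ≤ hi p k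

/-- Total utility of an assignment. -/
noncomputable def util15 (u : F → P → ℤ) (σ : F → Option P) : ℤ :=
  ∑ f, (σ f).elim 0 (u f)

/-- A part `Γ` is adjacent to place `p` iff its total requirement lies between the
quotas of `p` (componentwise). -/
def adj15 (r : F → Fin t → ℕ) (lo hi : P → Fin t → ℕ) (Γ : Finset F) (p : P) : Prop :=
  ∀ k, lo p k ≤ (∑ f ∈ Γ, r f k) ∧ (∑ f ∈ Γ, r f k) ≤ hi p k

/-- Weight of a matching (encoded as a partial map from places to parts). -/
noncomputable def weight15 (u : F → P → ℤ) (μ : P → Option (Finset F)) : ℤ :=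
  ∑ p, (μ p).elim 0 (fun Γ => ∑ f ∈ Γ, u f p)

/-- `μ` is a matching of the bipartite graph: matched pairs are edges (parts of `A`
adjacent to their place), no part is used twice, and every place with a nonzero
lower quota is matched. -/
def IsMatching15 (r : F → Fin t → ℕ) (lo hi : P → Fin t → ℕ)
    (A : Finset (Finset F)) (μ : P → Option (Finset F)) : Prop :=
  (∀ p Γ, μ p = some Γ → Γ ∈ A ∧ adj15 r lo hi Γ p) ∧
  (∀ p q Γ, μ p = some Γ → μ q = some Γ → p = q) ∧
  (∀ p, μ p = none → ∀ k, lo p k = 0)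

/-- The assignment corresponding to a matching: `f` is assigned to `p` iff `f`
belongs to the part matched to `p`. -/
def Linked15 (σ : F → Option P) (μ : P → Option (Finset F)) : Prop :=
  ∀ f p, σ f = some p ↔ ∃ Γ, μ p = some Γ ∧ f ∈ Γ

end

/-!
A matching `μ` and an assignment `σ` are linked exactly when the families assigned to `p` form
the part `μ p` (or nothing, if `p` is unmatched). So the load of `p` is the total requirement of
its part, which an edge keeps within the quotas, and both utility and weight sum `u f p` over the
same pairs `(f, p)`. Conversely, the nonempty fibres of a feasible assignment are matched to their
places: distinct places have disjoint fibres, and empty fibres occur only at zero lower quota.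
-/

open Finset

section
variable {F P : Type*} [Fintype F] {t : ℕ}

noncomputable abbrev fiber15 (σ : F → Option P) (p : P) : Finset F :=
  univ.filter fun f => σ f = some p

lemma load15_eq_sum_fiber15 (r : F → Fin t → ℕ) (σ : F → Option P) (p : P) (k : Fin t) :
    load15 r σ p k = ∑ f ∈ fiber15 σ p, r f k :=
  rfl

lemma util15_eq_sum_fiber15 [Fintype P] (u : F → P → ℤ) (σ : F → Option P) :
    util15 u σ = ∑ p, ∑ f ∈ fiber15 σ p, u f p := by
  have h : ∀ f, (σ f).elim 0 (u f) = ∑ p, if σ f = some p then u f p else 0 := by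
    intro f
    cases σ f <;> simp
  simp only [util15, h]
  rw [Finset.sum_comm]
  simp [Finset.sum_filter]

lemma Linked15.fiber15_eq {σ : F → Option P} {μ : P → Option (Finset F)}
    (h : Linked15 σ μ) (p : P) : fiber15 σ p = (μ p).getD ∅ := by
  ext f
  simp only [mem_filter, mem_univ, true_and, h f p]
  cases μ p <;> simp

lemma Linked15.util15_eq_weight15 [Fintype P] {σ : F → Option P} {μ : P → Option (Finset F)}
    (h : Linked15 σ μ) (u : F → P → ℤ) : util15 u σ = weight15 u μ := by
  rw [util15_eq_sum_fiber15, weight15]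
  refine sum_congr rfl fun p _ => ?_
  rw [h.fiber15_eq]
  cases μ p <;> simp

lemma Linked15.feasible15 {r : F → Fin t → ℕ} {lo hi : P → Fin t → ℕ}
    {A : Finset (Finset F)} {σ : F → Option P} {μ : P → Option (Finset F)}
    (hM : IsMatching15 r lo hi A μ) (h : Linked15 σ μ) : Feasible15 r lo hi σ := by
  obtain ⟨hedge, -, hlow⟩ := hM
  intro p k
  rw [load15_eq_sum_fiber15, h.fiber15_eq]
  cases hμ : μ p with
  | none => simp [hlow p hμ k]
  | some Γ => exact (hedge p Γ hμ).2 k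

noncomputable def matchingOf15 (σ : F → Option P) (p : P) : Option (Finset F) :=
  if (fiber15 σ p).Nonempty then some (fiber15 σ p) else none

lemma matchingOf15_eq_some {σ : F → Option P} {p : P} {Γ : Finset F} :
    matchingOf15 σ p = some Γ ↔ (fiber15 σ p).Nonempty ∧ fiber15 σ p = Γ := by
  unfold matchingOf15
  split_ifs with hne <;> simp [hne]

lemma linked15_matchingOf15 (σ : F → Option P) : Linked15 σ (matchingOf15 σ) := by
  intro f p
  simp only [matchingOf15_eq_some]
  constructor
  · intro hf
    have hmem : f ∈ fiber15 σ p := by simpa using hf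
    exact ⟨_, ⟨⟨f, hmem⟩, rfl⟩, hmem⟩
  · rintro ⟨_, ⟨-, rfl⟩, hf⟩
    simpa using hf

lemma isMatching15_matchingOf15 {r : F → Fin t → ℕ} {lo hi : P → Fin t → ℕ}
    {A : Finset (Finset F)} {σ : F → Option P} (hσ : Feasible15 r lo hi σ)
    (hA : ∀ p, (fiber15 σ p).Nonempty → fiber15 σ p ∈ A) :
    IsMatching15 r lo hi A (matchingOf15 σ) := by
  refine ⟨?_, ?_, ?_⟩
  · rintro p Γ hp
    obtain ⟨hne, rfl⟩ := matchingOf15_eq_some.mp hp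
    exact ⟨hA p hne, hσ p⟩
  · rintro p q Γ hp hq
    obtain ⟨⟨f, hf⟩, rfl⟩ := matchingOf15_eq_some.mp hp
    obtain ⟨-, hqp⟩ := matchingOf15_eq_some.mp hq
    have hfq : f ∈ fiber15 σ q := hqp ▸ hf
    simp only [mem_filter, mem_univ, true_and] at hf hfq
    exact Option.some_inj.mp (hf.symm.trans hfq)
  · intro p hp k
    have hempty : fiber15 σ p = ∅ := by
      by_contra hne
      simp [matchingOf15, nonempty_iff_ne_empty.mpr hne] at hp
    simpa [load15_eq_sum_fiber15, hempty] using (hσ p k).1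

end

theorem stmt_15_general {F P : Type*} [Fintype F] [Fintype P] {t : ℕ}
    (r : F → Fin t → ℕ) (lo hi : P → Fin t → ℕ) (u : F → P → ℤ)
    (A : Finset (Finset F)) :
    (∀ (μ : P → Option (Finset F)) (σ : F → Option P),
      IsMatching15 r lo hi A μ → Linked15 σ μ →
      Feasible15 r lo hi σ ∧ util15 u σ = weight15 u μ) ∧
    (∀ σ : F → Option P, Feasible15 r lo hi σ →
      (∀ p : P, (Finset.univ.filter (fun f => σ f = some p)).Nonempty →
        Finset.univ.filter (fun f => σ f = some p) ∈ A) →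
      ∃ μ : P → Option (Finset F),
        IsMatching15 r lo hi A μ ∧ Linked15 σ μ ∧ weight15 u μ = util15 u σ) :=
  ⟨fun _ _ hM hL => ⟨hL.feasible15 hM, hL.util15_eq_weight15 u⟩,
    fun σ hσ hA => ⟨matchingOf15 σ, isMatching15_matchingOf15 hσ hA, linked15_matchingOf15 σ,
      ((linked15_matchingOf15 σ).util15_eq_weight15 u).symm⟩⟩

/-- Matchings of the auxiliary bipartite graph between a partial partition `A` of
the families and the places correspond to feasible assignments whose nonempty
preimages are the matched parts, with matching weight equal to total utility. -/
theorem stmt_15 {F P : Type*} [Fintype F] [Fintype P] {t : ℕ}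
    (r : F → Fin t → ℕ) (lo hi : P → Fin t → ℕ) (u : F → P → ℤ)
    (A : Finset (Finset F))
    (hA1 : ∀ Γ ∈ A, Γ.Nonempty)
    (hA2 : ∀ Γ ∈ A, ∀ Γ' ∈ A, Γ ≠ Γ' → Disjoint Γ Γ') :
    (∀ (μ : P → Option (Finset F)) (σ : F → Option P),
      IsMatching15 r lo hi A μ → Linked15 σ μ →
      Feasible15 r lo hi σ ∧ util15 u σ = weight15 u μ) ∧
    (∀ σ : F → Option P, Feasible15 r lo hi σ →
      (∀ p : P, (Finset.univ.filter (fun f => σ f = some p)).Nonempty →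
        Finset.univ.filter (fun f => σ f = some p) ∈ A) →
      ∃ μ : P → Option (Finset F),
        IsMatching15 r lo hi A μ ∧ Linked15 σ μ ∧ weight15 u μ = util15 u σ) :=
  stmt_15_general r lo hi u A
end
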